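/- Let f : ℝ^{n×p} → ℝ be differentiable and let M > 0 be a constant such that ‖∇f(X)‖_F ≤ M for every X in the region R = {X ∈ ℝ^{n×p} : ‖XᵀX − I_p‖_F ≤ 1/6}. If the penalty parameter β satisfies β ≥ (6 + 21M)/5, then for every X ∈ R it holds that ‖H(X)‖_F² ≥ ‖G(X)‖_F² + β‖XᵀX − I_p‖_F². -/

import Mathlib

open Matrix BigOperators Finset Kronecker

/- Equip matrix spaces with the Frobenius norm (finite-dimensional, so the resulting calculus
notions such as `fderiv`/`Differentiable` are norm-independent). -/
attribute [local instance] Matrix.frobeniusNormedAddCommGroup Matrix.frobeniusNormedSpace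

/-- The Frobenius norm of a real matrix. -/
noncomputable def frob {m k : Type*} [Fintype m] [Fintype k] (A : Matrix m k ℝ) : ℝ :=
  Real.sqrt (∑ i, ∑ j, (A i j) ^ 2)

/-- The trace inner product ⟨A, B⟩ = tr(AᵀB) of real matrices. -/
noncomputable def minner {m k : Type*} [Fintype m] [Fintype k] (A B : Matrix m k ℝ) : ℝ :=
  (Aᵀ * B).trace

/-- The symmetric part sym(B) = (B + Bᵀ)/2 of a square matrix. -/
noncomputable def symPart {k : Type*} (B : Matrix k k ℝ) : Matrix k k ℝ :=
  (1 / 2 : ℝ) • (B + Bᵀ)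

/-- The generalized Riemannian gradient G(X) = ∇f(X)((3/2)I - (1/2)XᵀX) - X·sym(Xᵀ∇f(X)),
expressed in terms of the Euclidean gradient matrix `Gf = ∇f(X)`. -/
noncomputable def Gdir {n p : ℕ} (Gf X : Matrix (Fin n) (Fin p) ℝ) :
    Matrix (Fin n) (Fin p) ℝ :=
  Gf * ((3 / 2 : ℝ) • (1 : Matrix (Fin p) (Fin p) ℝ) - (1 / 2 : ℝ) • (Xᵀ * X))
    - X * symPart (Xᵀ * Gf)

/-- The feasibility direction E(X) = X(XᵀX - I). -/
noncomputable def Edir {n p : ℕ} (X : Matrix (Fin n) (Fin p) ℝ) :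
    Matrix (Fin n) (Fin p) ℝ :=
  X * (Xᵀ * X - 1)

/-- The spectral norm (largest singular value) of a real matrix, as the operator norm of the
associated Euclidean linear map. -/
noncomputable def specNorm {m k : Type*} [Fintype m] [Fintype k] [DecidableEq k]
    (A : Matrix m k ℝ) : ℝ :=
  ‖LinearMap.toContinuousLinearMap (Matrix.toEuclideanLin A)‖

/-- The smallest singular value of a real matrix: the square root of the smallest eigenvalue
of AᵀA (= AᴴA over ℝ). -/
noncomputable def sigmaMin {m k : Type*} [Fintype m] [Fintype k] [DecidableEq m] [DecidableEq k]
    (A : Matrix m k ℝ) : ℝ :=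
  Real.sqrt (⨅ i, (show (Aᵀ * A).IsHermitian by
    simpa [Matrix.conjTranspose_eq_transpose_of_trivial] using
      Matrix.isHermitian_conjTranspose_mul_self A).eigenvalues i)

/-!
Write `D = XᵀX - I` and `d = ‖D‖_F`. In `⟨G(X), E(X)⟩` the terms coming from the tangential part
of `G` cancel, leaving `⟨G, E⟩ = -(3/2)⟨∇f(X), XD²⟩`. The identity `‖XN‖² = ‖N‖² + ⟨N, DN⟩` shows
that multiplication by `X` changes squared norms by a factor within `1 ± d`, so
`|⟨G, E⟩| ≤ (7/4) M d²` and `‖E‖² = ‖XD‖² ≥ (5/6) d²`. Expanding `‖G + βE‖²` then leaves a surplus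
of `β d² (5β - 6 - 21M) / 6 ≥ 0` over `‖G‖² + β d²`.
-/

section Frobenius

variable {m k l : Type*} [Fintype m] [Fintype k] [Fintype l]

lemma frob_sq (A : Matrix m k ℝ) : frob A ^ 2 = ∑ i, ∑ j, A i j ^ 2 :=
  Real.sq_sqrt (by positivity)

lemma frob_eq_norm (A : Matrix m k ℝ) : frob A = ‖A‖ := by
  rw [frob, Matrix.frobenius_norm_def, Real.sqrt_eq_rpow]
  simp only [Real.norm_eq_abs, Real.rpow_two, sq_abs]

lemma frob_nonneg (A : Matrix m k ℝ) : 0 ≤ frob A := Real.sqrt_nonneg _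

lemma frob_mul_le (A : Matrix m k ℝ) (B : Matrix k l ℝ) : frob (A * B) ≤ frob A * frob B := by
  simpa only [frob_eq_norm] using Matrix.frobenius_norm_mul A B

lemma minner_eq_sum (A B : Matrix m k ℝ) : minner A B = ∑ i, ∑ j, A i j * B i j := by
  simp only [minner, Matrix.trace, Matrix.diag, Matrix.mul_apply, Matrix.transpose_apply]
  exact Finset.sum_comm

lemma minner_self (A : Matrix m k ℝ) : minner A A = frob A ^ 2 := by
  simp only [minner_eq_sum, frob_sq, ← sq]

lemma minner_le (A B : Matrix m k ℝ) : minner A B ≤ frob A * frob B := by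
  simpa only [minner_eq_sum, frob, ← Fintype.sum_prod_type'] using
    Real.sum_mul_le_sqrt_mul_sqrt Finset.univ (fun q : m × k ↦ A q.1 q.2) (fun q ↦ B q.1 q.2)

lemma abs_minner_le (A B : Matrix m k ℝ) : |minner A B| ≤ frob A * frob B := by
  refine abs_le.2 ⟨?_, minner_le A B⟩
  have h_neg : frob (-A) = frob A := by simp only [frob, Matrix.neg_apply, neg_sq]
  have h := minner_le (-A) B
  simp only [h_neg, minner_eq_sum, Matrix.neg_apply, neg_mul, Finset.sum_neg_distrib] at h ⊢
  linarith

lemma frob_add_smul_sq (A B : Matrix m k ℝ) (c : ℝ) :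
    frob (A + c • B) ^ 2 = frob A ^ 2 + 2 * c * minner A B + c ^ 2 * frob B ^ 2 := by
  simp only [frob_sq, minner_eq_sum, Matrix.add_apply, Matrix.smul_apply, smul_eq_mul,
    Finset.mul_sum, ← Finset.sum_add_distrib]
  exact Finset.sum_congr rfl fun i _ ↦ Finset.sum_congr rfl fun j _ ↦ by ring

lemma minner_sub_left (A B C : Matrix m k ℝ) : minner (A - B) C = minner A C - minner B C := by
  simp only [minner, Matrix.transpose_sub, Matrix.sub_mul, Matrix.trace_sub]

lemma minner_sub_right (A B C : Matrix m k ℝ) : minner A (B - C) = minner A B - minner A C := by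
  simp only [minner, Matrix.mul_sub, Matrix.trace_sub]

lemma minner_smul_right (A B : Matrix m k ℝ) (c : ℝ) : minner A (c • B) = c * minner A B := by
  simp only [minner, Matrix.mul_smul, Matrix.trace_smul, smul_eq_mul]

lemma minner_mul_left (X : Matrix m k ℝ) (A : Matrix k l ℝ) (B : Matrix m l ℝ) :
    minner (X * A) B = minner A (Xᵀ * B) := by
  rw [minner, minner, Matrix.transpose_mul, Matrix.mul_assoc]

lemma minner_mul_right (A : Matrix m l ℝ) (X : Matrix m k ℝ) (B : Matrix k l ℝ) :
    minner A (X * B) = minner (Xᵀ * A) B := by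
  rw [minner, minner, Matrix.transpose_mul, Matrix.transpose_transpose, Matrix.mul_assoc]

lemma minner_mul_left_right (A : Matrix m l ℝ) (C : Matrix l k ℝ) (B : Matrix m k ℝ) :
    minner (A * C) B = minner A (B * Cᵀ) := by
  rw [minner, minner, Matrix.transpose_mul, Matrix.mul_assoc, Matrix.trace_mul_comm,
    Matrix.mul_assoc]

lemma minner_symPart_of_transpose_eq (B N : Matrix k k ℝ) (hN : Nᵀ = N) :
    minner (symPart B) N = minner B N := by
  have h_transpose : minner Bᵀ N = minner B N := by
    rw [minner, minner, Matrix.transpose_transpose, ← Matrix.trace_transpose (Bᵀ * N),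
      Matrix.transpose_mul, hN, Matrix.trace_mul_comm, Matrix.transpose_transpose]
  simp only [symPart, minner, Matrix.transpose_smul, Matrix.transpose_add, Matrix.smul_mul,
    Matrix.add_mul, Matrix.trace_smul, Matrix.trace_add, smul_eq_mul] at h_transpose ⊢
  rw [h_transpose]
  ring

lemma abs_frob_mul_sq_sub_le [DecidableEq k] (X : Matrix m k ℝ) (N : Matrix k l ℝ) :
    |frob (X * N) ^ 2 - frob N ^ 2| ≤ frob (Xᵀ * X - 1) * frob N ^ 2 := by
  have h_expand : frob (X * N) ^ 2 - frob N ^ 2 = minner N ((Xᵀ * X - 1) * N) := by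
    rw [← minner_self, ← minner_self, minner_mul_left, ← Matrix.mul_assoc, Matrix.sub_mul,
      Matrix.one_mul, minner_sub_right]
  calc |frob (X * N) ^ 2 - frob N ^ 2|
      ≤ frob N * frob ((Xᵀ * X - 1) * N) := h_expand ▸ abs_minner_le _ _
    _ ≤ frob N * (frob (Xᵀ * X - 1) * frob N) :=
        mul_le_mul_of_nonneg_left (frob_mul_le _ _) (frob_nonneg N)
    _ = frob (Xᵀ * X - 1) * frob N ^ 2 := by ring

lemma frob_mul_le_of_frob_sub_one_le [DecidableEq k] {X : Matrix m k ℝ}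
    (hX : frob (Xᵀ * X - 1) ≤ 1 / 6) (N : Matrix k l ℝ) :
    frob (X * N) ≤ 7 / 6 * frob N := by
  have h_sq := (abs_le.1 (abs_frob_mul_sq_sub_le X N)).2
  have h_sq' : frob (X * N) ^ 2 ≤ (7 / 6 * frob N) ^ 2 := by
    nlinarith [sq_nonneg (frob N)]
  exact (pow_le_pow_iff_left₀ (frob_nonneg _) (by positivity [frob_nonneg N]) two_ne_zero).1 h_sq'

end Frobenius

section Stiefel

variable {n p : ℕ}

lemma minner_Gdir_Edir (Gf X : Matrix (Fin n) (Fin p) ℝ) :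
    minner (Gdir Gf X) (Edir X) = -(3 / 2) * minner Gf (X * ((Xᵀ * X - 1) * (Xᵀ * X - 1))) := by
  have hY : (Xᵀ * X)ᵀ = Xᵀ * X := by rw [Matrix.transpose_mul, Matrix.transpose_transpose]
  have h_tangent : minner (Gf * ((3 / 2 : ℝ) • 1 - (1 / 2 : ℝ) • (Xᵀ * X))) (X * (Xᵀ * X - 1))
      = minner (Xᵀ * Gf) ((Xᵀ * X - 1) * ((3 / 2 : ℝ) • 1 - (1 / 2 : ℝ) • (Xᵀ * X))) := by
    rw [minner_mul_left_right, Matrix.transpose_sub, Matrix.transpose_smul,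
      Matrix.transpose_smul, Matrix.transpose_one, hY, Matrix.mul_assoc, minner_mul_right]
  have h_normal : minner (X * symPart (Xᵀ * Gf)) (X * (Xᵀ * X - 1))
      = minner (Xᵀ * Gf) (Xᵀ * X * (Xᵀ * X - 1)) := by
    refine (minner_mul_left _ _ _).trans ?_
    rw [← Matrix.mul_assoc]
    refine minner_symPart_of_transpose_eq _ _ ?_
    rw [Matrix.transpose_mul, Matrix.transpose_sub, Matrix.transpose_one, hY, Matrix.mul_sub,
      Matrix.sub_mul, Matrix.mul_one, Matrix.one_mul]
  rw [Gdir, Edir, minner_sub_left, h_tangent, h_normal, ← minner_sub_right, minner_mul_right,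
    ← minner_smul_right]
  congr 1
  simp only [Matrix.mul_sub, Matrix.sub_mul, Matrix.mul_smul, Matrix.mul_one, Matrix.one_mul]
  module

lemma neg_le_minner_Gdir_Edir {Gf X : Matrix (Fin n) (Fin p) ℝ} {M : ℝ} (hGf : frob Gf ≤ M)
    (hX : frob (Xᵀ * X - 1) ≤ 1 / 6) :
    -(7 / 4) * M * frob (Xᵀ * X - 1) ^ 2 ≤ minner (Gdir Gf X) (Edir X) := by
  set D := Xᵀ * X - 1
  have h_XDD : frob (X * (D * D)) ≤ 7 / 6 * frob D ^ 2 :=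
    calc frob (X * (D * D)) ≤ 7 / 6 * frob (D * D) := frob_mul_le_of_frob_sub_one_le hX _
      _ ≤ 7 / 6 * frob D ^ 2 := by nlinarith [frob_mul_le D D]
  have h_inner : |minner Gf (X * (D * D))| ≤ M * (7 / 6 * frob D ^ 2) :=
    (abs_minner_le _ _).trans
      (mul_le_mul hGf h_XDD (frob_nonneg _) ((frob_nonneg Gf).trans hGf))
  rw [minner_Gdir_Edir]
  linarith [(abs_le.1 h_inner).2]

end Stiefel

theorem stmt0_general {n p : ℕ}
    (gradf : Matrix (Fin n) (Fin p) ℝ → Matrix (Fin n) (Fin p) ℝ)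
    (M : ℝ)
    (hbound : ∀ X : Matrix (Fin n) (Fin p) ℝ, frob (Xᵀ * X - 1) ≤ 1 / 6 → frob (gradf X) ≤ M)
    (β : ℝ) (hβ : (6 + 21 * M) / 5 ≤ β)
    (X : Matrix (Fin n) (Fin p) ℝ) (hX : frob (Xᵀ * X - 1) ≤ 1 / 6) :
    frob (Gdir (gradf X) X) ^ 2 + β * frob (Xᵀ * X - 1) ^ 2
      ≤ frob (Gdir (gradf X) X + β • Edir X) ^ 2 := by
  have hM : 0 ≤ M := (frob_nonneg _).trans (hbound X hX)
  have hβ_nonneg : 0 ≤ β := by linarith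
  have h_cross := neg_le_minner_Gdir_Edir (hbound X hX) hX
  have h_feas : 5 / 6 * frob (Xᵀ * X - 1) ^ 2 ≤ frob (Edir X) ^ 2 := by
    have h_sq := (abs_le.1 (abs_frob_mul_sq_sub_le X (Xᵀ * X - 1))).1
    rw [Edir]
    nlinarith [mul_le_mul_of_nonneg_right hX (sq_nonneg (frob (Xᵀ * X - 1)))]
  rw [frob_add_smul_sq]
  nlinarith [mul_le_mul_of_nonneg_left h_cross hβ_nonneg,
    mul_le_mul_of_nonneg_left h_feas (sq_nonneg β),
    mul_nonneg (mul_nonneg hβ_nonneg (sq_nonneg (frob (Xᵀ * X - 1)))) (sub_nonneg.2 hβ)]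

/-- Lemma `le:expen` of the paper. If `f` is differentiable with gradient `gradf`,
`‖∇f(X)‖_F ≤ M` on the region `R = {X : ‖XᵀX - I‖_F ≤ 1/6}`, and `β ≥ (6 + 21M)/5`, then for
every `X ∈ R`, `‖H(X)‖_F² ≥ ‖G(X)‖_F² + β‖XᵀX - I‖_F²`, where `H(X) = G(X) + βE(X)`. -/
theorem stmt0 {n p : ℕ} (f : Matrix (Fin n) (Fin p) ℝ → ℝ)
    (hf : Differentiable ℝ f)
    (gradf : Matrix (Fin n) (Fin p) ℝ → Matrix (Fin n) (Fin p) ℝ)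
    (hgrad : ∀ X V, fderiv ℝ f X V = minner (gradf X) V)
    (M : ℝ) (hM : 0 < M)
    (hbound : ∀ X : Matrix (Fin n) (Fin p) ℝ, frob (Xᵀ * X - 1) ≤ 1 / 6 → frob (gradf X) ≤ M)
    (β : ℝ) (hβ : (6 + 21 * M) / 5 ≤ β)
    (X : Matrix (Fin n) (Fin p) ℝ) (hX : frob (Xᵀ * X - 1) ≤ 1 / 6) :
    frob (Gdir (gradf X) X) ^ 2 + β * frob (Xᵀ * X - 1) ^ 2
      ≤ frob (Gdir (gradf X) X + β • Edir X) ^ 2 :=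
  stmt0_general gradf M hbound β hβ X hX
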